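/- Uniqueness for the singular ODE: Let $-2 < \beta < 0$, $c_1, c_2 \geq 0$, $s = -1-2/\beta$, $s' = -1-3/\beta$. If $w_1, w_2 \in C^2(0,\pi/2) \cap C[0,\pi/2]$ are both positive on $(0,\pi/2)$, vanish at $0$ and $\pi/2$, and satisfy $-w_i'' = \beta^2 w_i + c_1 w_i^{-s} + c_2\sin\phi\,w_i^{-s'}$ on $(0,\pi/2)$, then $w_1 = w_2$. -/

import Mathlib

open Real Set Filter Topology

/-!
Put `v = w₁ - w₂`. Where `v > 0`, i.e. `w₁ > w₂ > 0`, the singular terms `w ^ (1 + 2/β)` and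
`w ^ (1 + 3/β)` have nonpositive exponents and are therefore smaller at `w₁`, so
`-v'' ≤ β² v` there. Since `β² < 4 = (π / (π/2))²` lies below the principal Dirichlet eigenvalue,
this forces `v ≤ 0`: pick `β² < γ² < 4`, so that `ψ = cos (γ (φ - π/4))` is positive on
`[0, π/2]` with `-ψ'' = γ² ψ`; at a positive maximum `M` of `v / ψ` the function `v - M ψ` has a
local maximum, whence `-v'' ≥ γ² v > β² v`. By symmetry `w₁ = w₂`.
-/

theorem IsLocalMax.deriv_deriv_nonpos {f : ℝ → ℝ} {x₀ : ℝ} (h : IsLocalMax f x₀)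
    (hc : ContinuousAt f x₀) : deriv (deriv f) x₀ ≤ 0 := by
  by_contra! hpos
  -- a point that is both a local maximum and a local minimum has `f` locally constant
  have hmin : IsLocalMin f x₀ := isLocalMin_of_deriv_deriv_pos hpos h.deriv_eq_zero hc
  have hconst : f =ᶠ[𝓝 x₀] fun _ => f x₀ := by
    filter_upwards [h, hmin] with x hmax hmin' using le_antisymm hmax hmin'
  have hderiv : deriv f =ᶠ[𝓝 x₀] fun _ => 0 := by simpa using hconst.deriv
  simp [hderiv.deriv_eq] at hpos

theorem deriv_fun_sub_eventuallyEq {f g : ℝ → ℝ} {x : ℝ}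
    (hf : ∀ᶠ y in 𝓝 x, DifferentiableAt ℝ f y) (hg : ∀ᶠ y in 𝓝 x, DifferentiableAt ℝ g y) :
    deriv (fun y => f y - g y) =ᶠ[𝓝 x] fun y => deriv f y - deriv g y := by
  filter_upwards [hf, hg] with y hfy hgy using deriv_fun_sub hfy hgy

theorem deriv_deriv_fun_sub {f g : ℝ → ℝ} {x : ℝ}
    (hf : ∀ᶠ y in 𝓝 x, DifferentiableAt ℝ f y) (hg : ∀ᶠ y in 𝓝 x, DifferentiableAt ℝ g y)
    (hf' : DifferentiableAt ℝ (deriv f) x) (hg' : DifferentiableAt ℝ (deriv g) x) :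
    deriv (deriv fun y => f y - g y) x = deriv (deriv f) x - deriv (deriv g) x := by
  rw [(deriv_fun_sub_eventuallyEq hf hg).deriv_eq, deriv_fun_sub hf' hg']

theorem nonpos_of_neg_deriv_deriv_le_of_supersolution {a b κ μ : ℝ} {v ψ : ℝ → ℝ}
    (hκμ : κ < μ) (hv : ContinuousOn v (Icc a b))
    (hv₁ : ∀ x ∈ Ioo a b, DifferentiableAt ℝ v x)
    (hv₂ : ∀ x ∈ Ioo a b, DifferentiableAt ℝ (deriv v) x)
    (ha : v a ≤ 0) (hb : v b ≤ 0)
    (hv_sub : ∀ x ∈ Ioo a b, 0 < v x → -deriv (deriv v) x ≤ κ * v x)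
    (hψ : ContinuousOn ψ (Icc a b)) (hψ_pos : ∀ x ∈ Icc a b, 0 < ψ x)
    (hψ₁ : ∀ x ∈ Ioo a b, DifferentiableAt ℝ ψ x)
    (hψ₂ : ∀ x ∈ Ioo a b, DifferentiableAt ℝ (deriv ψ) x)
    (hψ_super : ∀ x ∈ Ioo a b, μ * ψ x ≤ -deriv (deriv ψ) x) :
    ∀ x ∈ Icc a b, v x ≤ 0 := by
  by_contra! ⟨x, hx, hvx⟩
  obtain ⟨x₀, hx₀, hmax⟩ := isCompact_Icc.exists_isMaxOn ⟨x, hx⟩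
    (hv.div hψ fun y hy => (hψ_pos y hy).ne')
  set M := v x₀ / ψ x₀
  have hM : 0 < M := (div_pos hvx (hψ_pos x hx)).trans_le (hmax hx)
  have hx₀a : x₀ ≠ a := by
    rintro rfl; exact (div_nonpos_of_nonpos_of_nonneg ha (hψ_pos _ hx₀).le).not_gt hM
  have hx₀b : x₀ ≠ b := by
    rintro rfl; exact (div_nonpos_of_nonpos_of_nonneg hb (hψ_pos _ hx₀).le).not_gt hM
  have hx₀' : x₀ ∈ Ioo a b := ⟨hx₀.1.lt_of_ne' hx₀a, hx₀.2.lt_of_ne hx₀b⟩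
  have hnhds : Ioo a b ∈ 𝓝 x₀ := isOpen_Ioo.mem_nhds hx₀'
  -- `v - M ψ` touches `0` from below at `x₀`
  have hlocmax : IsLocalMax (fun y => v y - M * ψ y) x₀ := by
    refine IsMaxOn.isLocalMax (s := Icc a b) (fun y hy => ?_) (Icc_mem_nhds hx₀'.1 hx₀'.2)
    have hy' : v y / ψ y ≤ M := hmax hy
    rw [div_le_iff₀ (hψ_pos y hy)] at hy'
    simp only [mem_ofPred_eq, M, div_mul_cancel₀ _ (hψ_pos x₀ hx₀).ne']
    linarith
  have hsecond := hlocmax.deriv_deriv_nonpos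
    (((hv₁ x₀ hx₀').sub ((hψ₁ x₀ hx₀').const_mul M)).continuousAt)
  rw [deriv_deriv_fun_sub (eventually_of_mem hnhds hv₁)
    (eventually_of_mem hnhds fun y hy => (hψ₁ y hy).const_mul M) (hv₂ x₀ hx₀')
    (by rw [deriv_const_mul_field']; exact (hψ₂ x₀ hx₀').const_mul M),
    deriv_const_mul_field', deriv_const_mul_field'] at hsecond
  beta_reduce at hsecond
  have hvx₀ : v x₀ = M * ψ x₀ := (div_mul_cancel₀ _ (hψ_pos x₀ hx₀).ne').symm
  have hvx₀_pos : 0 < v x₀ := hvx₀ ▸ mul_pos hM (hψ_pos x₀ hx₀)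
  have hμκ : μ * v x₀ ≤ κ * v x₀ := by
    have := mul_le_mul_of_nonneg_left (hψ_super x₀ hx₀') hM.le
    have hμv : μ * v x₀ = M * (μ * ψ x₀) := by rw [hvx₀]; ring
    linarith [hv_sub x₀ hx₀' hvx₀_pos]
  exact (mul_lt_mul_of_pos_right hκμ hvx₀_pos).not_ge hμκ

theorem hasDerivAt_mul_sub (γ c y : ℝ) : HasDerivAt (fun y => γ * (y - c)) γ y := by
  simpa using ((hasDerivAt_id y).sub_const c).const_mul γ

theorem deriv_cos_mul_sub (γ c : ℝ) :
    deriv (fun y => cos (γ * (y - c))) = fun y => -sin (γ * (y - c)) * γ :=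
  funext fun y => (hasDerivAt_mul_sub γ c y).cos.deriv

theorem deriv_deriv_cos_mul_sub (γ c : ℝ) :
    deriv (deriv fun y => cos (γ * (y - c))) = fun y => -(γ ^ 2 * cos (γ * (y - c))) := by
  funext y
  rw [deriv_cos_mul_sub, ((hasDerivAt_mul_sub γ c y).sin.fun_neg.mul_const γ).deriv]
  ring

theorem cos_mul_sub_midpoint_pos {a b γ x : ℝ} (hγ : 0 ≤ γ) (hγab : γ * (b - a) < π)
    (hx : x ∈ Icc a b) : 0 < cos (γ * (x - (a + b) / 2)) := by
  apply cos_pos_of_mem_Ioo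
  constructor <;> nlinarith [mul_nonneg hγ (sub_nonneg.2 hx.1), mul_nonneg hγ (sub_nonneg.2 hx.2)]

theorem nonpos_of_neg_deriv_deriv_le {a b κ : ℝ} {v : ℝ → ℝ} (hκ : κ < (π / (b - a)) ^ 2)
    (hv : ContinuousOn v (Icc a b))
    (hv₁ : ∀ x ∈ Ioo a b, DifferentiableAt ℝ v x)
    (hv₂ : ∀ x ∈ Ioo a b, DifferentiableAt ℝ (deriv v) x)
    (ha : v a ≤ 0) (hb : v b ≤ 0)
    (hv_sub : ∀ x ∈ Ioo a b, 0 < v x → -deriv (deriv v) x ≤ κ * v x) :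
    ∀ x ∈ Icc a b, v x ≤ 0 := by
  intro x hx
  rcases hx.1.eq_or_lt with rfl | hax
  · exact ha
  have hab : 0 < b - a := sub_pos.2 (hax.trans_le hx.2)
  obtain ⟨γ, hγ, hκγ, hγab⟩ : ∃ γ, 0 ≤ γ ∧ κ < γ ^ 2 ∧ γ * (b - a) < π := by
    obtain ⟨m, hκm, hm⟩ := exists_between (max_lt hκ (by positivity : 0 < (π / (b - a)) ^ 2))
    have hm₀ : 0 ≤ m := (le_max_right _ _).trans hκm.le
    refine ⟨√m, sqrt_nonneg m, ?_, ?_⟩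
    · rw [sq_sqrt hm₀]
      exact (le_max_left _ _).trans_lt hκm
    · rw [← lt_div_iff₀ hab, sqrt_lt' (by positivity)]
      exact hm
  refine nonpos_of_neg_deriv_deriv_le_of_supersolution hκγ hv hv₁ hv₂ ha hb hv_sub
    (ψ := fun y => cos (γ * (y - (a + b) / 2))) (by fun_prop)
    (fun y hy => cos_mul_sub_midpoint_pos hγ hγab hy) (fun _ _ => by fun_prop)
    (fun _ _ => by rw [deriv_cos_mul_sub]; fun_prop)
    (fun _ _ => by rw [deriv_deriv_cos_mul_sub, neg_neg]) x hx

theorem le_of_subsolution_of_supersolution {a b κ : ℝ} {F : ℝ → ℝ → ℝ} {u w : ℝ → ℝ}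
    (hκ : κ < (π / (b - a)) ^ 2)
    (hF : ∀ x ∈ Ioo a b, ∀ s t, 0 < t → t < s → F x s - F x t ≤ κ * (s - t))
    (hu : ContinuousOn u (Icc a b)) (hw : ContinuousOn w (Icc a b))
    (hu₁ : ∀ x ∈ Ioo a b, DifferentiableAt ℝ u x)
    (hu₂ : ∀ x ∈ Ioo a b, DifferentiableAt ℝ (deriv u) x)
    (hw₁ : ∀ x ∈ Ioo a b, DifferentiableAt ℝ w x)
    (hw₂ : ∀ x ∈ Ioo a b, DifferentiableAt ℝ (deriv w) x)
    (hw_pos : ∀ x ∈ Ioo a b, 0 < w x)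
    (hu_sub : ∀ x ∈ Ioo a b, -deriv (deriv u) x ≤ F x (u x))
    (hw_super : ∀ x ∈ Ioo a b, F x (w x) ≤ -deriv (deriv w) x)
    (ha : u a ≤ w a) (hb : u b ≤ w b) :
    ∀ x ∈ Icc a b, u x ≤ w x := by
  have hu₁' : ∀ x ∈ Ioo a b, ∀ᶠ y in 𝓝 x, DifferentiableAt ℝ u y :=
    fun x hx => eventually_of_mem (isOpen_Ioo.mem_nhds hx) hu₁
  have hw₁' : ∀ x ∈ Ioo a b, ∀ᶠ y in 𝓝 x, DifferentiableAt ℝ w y :=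
    fun x hx => eventually_of_mem (isOpen_Ioo.mem_nhds hx) hw₁
  have hv := nonpos_of_neg_deriv_deriv_le (v := fun y => u y - w y) hκ (hu.sub hw)
    (fun x hx => (hu₁ x hx).sub (hw₁ x hx))
    (fun x hx => ((hu₂ x hx).sub (hw₂ x hx)).congr_of_eventuallyEq
      (deriv_fun_sub_eventuallyEq (hu₁' x hx) (hw₁' x hx)))
    (sub_nonpos.2 ha) (sub_nonpos.2 hb) fun x hx hvx => ?_
  · exact fun x hx => sub_nonpos.1 (hv x hx)
  · rw [deriv_deriv_fun_sub (hu₁' x hx) (hw₁' x hx) (hu₂ x hx) (hw₂ x hx)]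
    have := hF x hx (u x) (w x) (hw_pos x hx) (sub_pos.1 hvx)
    linarith [hu_sub x hx, hw_super x hx]

theorem mul_rpow_add_mul_rpow_le {c₁ c₂ p q s t : ℝ} (hc₁ : 0 ≤ c₁) (hc₂ : 0 ≤ c₂)
    (hp : p ≤ 0) (hq : q ≤ 0) (ht : 0 < t) (hts : t ≤ s) :
    c₁ * s ^ p + c₂ * s ^ q ≤ c₁ * t ^ p + c₂ * t ^ q :=
  add_le_add (mul_le_mul_of_nonneg_left (rpow_le_rpow_of_nonpos ht hts hp) hc₁)
    (mul_le_mul_of_nonneg_left (rpow_le_rpow_of_nonpos ht hts hq) hc₂)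

theorem one_add_div_nonpos {β k : ℝ} (hβ : β < 0) (hk : -β ≤ k) : 1 + k / β ≤ 0 := by
  have : k / β ≤ -1 := by rw [div_le_iff_of_neg hβ]; linarith
  linarith

/-- Uniqueness for the singular ODE: for `-2 < β < 0`, `c₁, c₂ ≥ 0`,
`s = -1-2/β`, `s' = -1-3/β`, two positive solutions
`w ∈ C²(0,π/2) ∩ C[0,π/2]` of `-w'' = β²w + c₁ w^{-s} + c₂ sin φ w^{-s'}`
vanishing at the endpoints coincide.  (Note `-s = 1+2/β`, `-s' = 1+3/β`.) -/
theorem uniqueness_singular_ode (β c1 c2 : ℝ) (hβ1 : -2 < β) (hβ2 : β < 0)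
    (hc1 : 0 ≤ c1) (hc2 : 0 ≤ c2)
    (w1 w2 : ℝ → ℝ)
    (hw1c : ContinuousOn w1 (Set.Icc 0 (Real.pi/2)))
    (hw2c : ContinuousOn w2 (Set.Icc 0 (Real.pi/2)))
    (hw1d : ∀ φ ∈ Set.Ioo (0:ℝ) (Real.pi/2), DifferentiableAt ℝ w1 φ)
    (hw1d2 : ∀ φ ∈ Set.Ioo (0:ℝ) (Real.pi/2), DifferentiableAt ℝ (deriv w1) φ)
    (hw2d : ∀ φ ∈ Set.Ioo (0:ℝ) (Real.pi/2), DifferentiableAt ℝ w2 φ)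
    (hw2d2 : ∀ φ ∈ Set.Ioo (0:ℝ) (Real.pi/2), DifferentiableAt ℝ (deriv w2) φ)
    (hpos1 : ∀ φ ∈ Set.Ioo (0:ℝ) (Real.pi/2), 0 < w1 φ)
    (hpos2 : ∀ φ ∈ Set.Ioo (0:ℝ) (Real.pi/2), 0 < w2 φ)
    (hode1 : ∀ φ ∈ Set.Ioo (0:ℝ) (Real.pi/2),
      -(deriv (deriv w1) φ) = β ^ 2 * w1 φ + c1 * w1 φ ^ (1 + 2/β)
        + c2 * Real.sin φ * w1 φ ^ (1 + 3/β))
    (hode2 : ∀ φ ∈ Set.Ioo (0:ℝ) (Real.pi/2),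
      -(deriv (deriv w2) φ) = β ^ 2 * w2 φ + c1 * w2 φ ^ (1 + 2/β)
        + c2 * Real.sin φ * w2 φ ^ (1 + 3/β))
    (hb10 : w1 0 = 0) (hb1π : w1 (Real.pi/2) = 0)
    (hb20 : w2 0 = 0) (hb2π : w2 (Real.pi/2) = 0) :
    ∀ φ ∈ Set.Icc (0:ℝ) (Real.pi/2), w1 φ = w2 φ := by
  let F : ℝ → ℝ → ℝ := fun φ s => β ^ 2 * s + c1 * s ^ (1 + 2 / β) + c2 * sin φ * s ^ (1 + 3 / β)
  have hκ : β ^ 2 < (π / (π / 2 - 0)) ^ 2 := by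
    rw [sub_zero, div_div_cancel₀ pi_ne_zero]
    nlinarith
  have hF : ∀ φ ∈ Ioo 0 (π / 2), ∀ s t, 0 < t → t < s → F φ s - F φ t ≤ β ^ 2 * (s - t) := by
    intro φ hφ s t ht hts
    have hsin : 0 ≤ sin φ := sin_nonneg_of_nonneg_of_le_pi hφ.1.le (by linarith [hφ.2, pi_pos])
    have := mul_rpow_add_mul_rpow_le hc1 (mul_nonneg hc2 hsin)
      (one_add_div_nonpos (k := 2) hβ2 (by linarith))
      (one_add_div_nonpos (k := 3) hβ2 (by linarith)) ht hts.le
    simp only [F]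
    linarith
  intro φ hφ
  exact le_antisymm
    (le_of_subsolution_of_supersolution hκ hF hw1c hw2c hw1d hw1d2 hw2d hw2d2 hpos2
      (fun x hx => (hode1 x hx).le) (fun x hx => (hode2 x hx).ge)
      (hb10.trans hb20.symm).le (hb1π.trans hb2π.symm).le φ hφ)
    (le_of_subsolution_of_supersolution hκ hF hw2c hw1c hw2d hw2d2 hw1d hw1d2 hpos1
      (fun x hx => (hode2 x hx).le) (fun x hx => (hode1 x hx).ge)
      (hb20.trans hb10.symm).le (hb2π.trans hb1π.symm).le φ hφ)
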